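/- If a metric space X is separable at scale r (i.e., there is a countable subset S with B(S,r) = X), then there exists a 6r-cobounded barycentric partition of unity f on X whose Lebesgue number is at least r. -/

import Mathlib

/-!
Enumerate the `r`-dense countable set as `e 0, e 1, …` and let `N x` be the first index with
`dist x (e (N x)) < r`. The carrier of `x` consists of the indices `n ≤ N x` with
`dist x (e n) < 3 r`; it contains `N x`, and two points sharing an index `n` are within `3 r` of
`e n`, hence within `6 r` of each other. For the Lebesgue number, take for `x` the first index `v`
with `dist x (e v) < 2 r`: every `y` in the `r`-ball around `x` has `dist x (e (N y)) < 2 r`, so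
`v ≤ N y`, and `dist y (e v) < 3 r`.
-/

open Finset

section

variable {X : Type*} [PseudoMetricSpace X]

/-- Junk value `0` if no index works. -/
noncomputable def firstIndexWithin (e : ℕ → X) (ρ : ℝ) (x : X) : ℕ :=
  sInf {n | dist x (e n) < ρ}

lemma dist_firstIndexWithin_lt {e : ℕ → X} {ρ : ℝ} {x : X} (h : ∃ n, dist x (e n) < ρ) :
    dist x (e (firstIndexWithin e ρ x)) < ρ :=
  Nat.sInf_mem h

lemma firstIndexWithin_le {e : ℕ → X} {ρ : ℝ} {x : X} {n : ℕ} (h : dist x (e n) < ρ) :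
    firstIndexWithin e ρ x ≤ n :=
  Nat.sInf_le h

noncomputable def barycentricCarrier (e : ℕ → X) (r : ℝ) (x : X) : Finset ℕ :=
  (range (firstIndexWithin e r x + 1)).filter fun n => dist x (e n) < 3 * r

lemma mem_barycentricCarrier {e : ℕ → X} {r : ℝ} {x : X} {n : ℕ} :
    n ∈ barycentricCarrier e r x ↔ n ≤ firstIndexWithin e r x ∧ dist x (e n) < 3 * r := by
  simp [barycentricCarrier]

lemma barycentricCarrier_nonempty {e : ℕ → X} {r : ℝ} {x : X} (h : ∃ n, dist x (e n) < r) :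
    (barycentricCarrier e r x).Nonempty := by
  have hlt := dist_firstIndexWithin_lt h
  have hr : 0 < r := dist_nonneg.trans_lt hlt
  exact ⟨_, mem_barycentricCarrier.2 ⟨le_rfl, by linarith⟩⟩

lemma dist_lt_of_mem_barycentricCarrier {e : ℕ → X} {r : ℝ} {x y : X} {v : ℕ}
    (hx : v ∈ barycentricCarrier e r x) (hy : v ∈ barycentricCarrier e r y) :
    dist x y < 6 * r := by
  have hxv := (mem_barycentricCarrier.1 hx).2
  have hyv := (mem_barycentricCarrier.1 hy).2
  calc dist x y ≤ dist x (e v) + dist y (e v) := dist_triangle_right _ _ _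
    _ < 6 * r := by linarith

lemma exists_forall_ball_mem_barycentricCarrier {e : ℕ → X} {r : ℝ}
    (hcover : ∀ x, ∃ n, dist x (e n) < r) (x : X) :
    ∃ v, ∀ y, dist y x < r → v ∈ barycentricCarrier e r y := by
  refine ⟨firstIndexWithin e (2 * r) x, fun y hyx => mem_barycentricCarrier.2 ⟨?_, ?_⟩⟩
  · have hy := dist_firstIndexWithin_lt (hcover y)
    apply firstIndexWithin_le
    calc dist x (e (firstIndexWithin e r y)) ≤ dist y x + dist y (e (firstIndexWithin e r y)) :=
          dist_triangle_left _ _ _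
      _ < 2 * r := by linarith
  · have hx : dist x (e (firstIndexWithin e (2 * r) x)) < 2 * r :=
      dist_firstIndexWithin_lt <| (hcover x).imp fun n hn => by
        linarith [dist_nonneg.trans_lt hn]
    calc dist y (e (firstIndexWithin e (2 * r) x))
        ≤ dist y x + dist x (e (firstIndexWithin e (2 * r) x)) := dist_triangle _ _ _
      _ < 3 * r := by linarith

end

theorem stmt_7 {X : Type*} [MetricSpace X] (r : ℝ)
    (S : Set X) (hS : S.Countable) (hdense : ∀ x : X, ∃ s ∈ S, dist x s < r) :
    ∃ (V : Type) (C : X → Finset V),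
      (∀ x, (C x).Nonempty) ∧
      (∀ v : V, ∀ x y : X, v ∈ C x → v ∈ C y → dist x y < 6 * r) ∧
      (∀ x : X, ∃ v : V, ∀ y : X, dist y x < r → v ∈ C y) := by
  rcases S.eq_empty_or_nonempty with rfl | hne
  · have : IsEmpty X := ⟨fun x => by simpa using hdense x⟩
    exact ⟨ℕ, fun _ => ∅, isEmptyElim, fun _ => isEmptyElim, isEmptyElim⟩
  obtain ⟨e, rfl⟩ := hS.exists_eq_range hne
  have hcover : ∀ x, ∃ n, dist x (e n) < r := by simpa using hdense
  exact ⟨ℕ, barycentricCarrier e r, fun x => barycentricCarrier_nonempty (hcover x),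
    fun _ _ _ => dist_lt_of_mem_barycentricCarrier,
    exists_forall_ball_mem_barycentricCarrier hcover⟩
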